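/- arXiv:2603.15145 — 2 statements merged into one kernel-verified Lean document; each statement's English description precedes it below -/
import Mathlib

section
/- Let P(m,t) = (−1/2 + m/(cos t + 1) + (m−1)cos t, (1−m)sin t, m√(2cos t + 1)/(cos t + 1)) for m ∈ [0,1] and t ∈ (−2π/3, 2π/3), regarded as a map into ℝ³. Then the cross product of the partial derivatives satisfies (∂P/∂m) × (∂P/∂t) = ( cos t·((3m−2)cos t − 1) / (2 cos²(t/2)·√(2cos t + 1)), sin t·((2−3m)cos t + 1) / ((cos t + 1)·√(2cos t + 1)), ((2−3m)cos t + 1) / (cos t + 1) ). -/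
open Real Matrix

/-- Parametrization of the upper sheet of the oloid surface. -/
noncomputable def oloidP (m t : ℝ) : Fin 3 → ℝ :=
  ![-1/2 + m / (Real.cos t + 1) + (m - 1) * Real.cos t,
    (1 - m) * Real.sin t,
    m * Real.sqrt (2 * Real.cos t + 1) / (Real.cos t + 1)]

/-!
Both partial derivatives are explicit rational expressions in `c = cos t`, `s = sin t` and
`r = √(2c + 1)`; the cross product then reduces to an identity of rational functions modulo
`s² + c² = 1` and `r² = 2c + 1`. On `(-2π/3, 2π/3)` one has `c > -1/2`, so `r` and `c + 1` are
positive, and the half-angle identity `2 cos²(t/2) = c + 1` puts the first component in the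
stated form.
-/

lemma neg_half_lt_cos_of_mem_Ioo {t : ℝ} (ht : t ∈ Set.Ioo (-(2 * π / 3)) (2 * π / 3)) :
    -(1 / 2) < cos t := by
  have hcos : cos (2 * π / 3) = -(1 / 2) := by
    rw [show 2 * π / 3 = π - π / 3 by ring, cos_pi_sub, cos_pi_div_three]
  rw [← cos_abs t, ← hcos]
  exact cos_lt_cos_of_nonneg_of_le_pi (abs_nonneg t) (by linarith [pi_pos])
    (abs_lt.mpr ht)

lemma hasDerivAt_oloidP_fst (m t : ℝ) :
    HasDerivAt (fun m' => oloidP m' t)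
      ![1 / (cos t + 1) + cos t, -sin t, √(2 * cos t + 1) / (cos t + 1)] m := by
  rw [hasDerivAt_pi]
  intro i
  fin_cases i <;> simp only [oloidP, Fin.zero_eta, Fin.mk_one, Fin.reduceFinMk, cons_val]
  · exact ((((hasDerivAt_id' m).div_const (cos t + 1)).const_add (-1 / 2)).add
      (((hasDerivAt_id' m).sub_const 1).mul_const (cos t))).congr_deriv (by ring)
  · exact (((hasDerivAt_id' m).const_sub 1).mul_const (sin t)).congr_deriv (by ring)
  · exact (((hasDerivAt_id' m).mul_const √(2 * cos t + 1)).div_const (cos t + 1)).congr_deriv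
      (by ring)

lemma hasDerivAt_oloidP_snd (m t : ℝ) (hcos : -(1 / 2) < cos t) :
    HasDerivAt (fun t' => oloidP m t')
      ![m * sin t / (cos t + 1) ^ 2 + (1 - m) * sin t,
        (1 - m) * cos t,
        m * sin t * cos t / (√(2 * cos t + 1) * (cos t + 1) ^ 2)] t := by
  have hden : cos t + 1 ≠ 0 := by linarith
  have hrad : 2 * cos t + 1 ≠ 0 := by linarith
  have hr : √(2 * cos t + 1) ≠ 0 := (sqrt_pos.mpr (by linarith)).ne'
  have hrr : √(2 * cos t + 1) ^ 2 = 2 * cos t + 1 := sq_sqrt (by linarith)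
  have hden' : HasDerivAt (fun t' => cos t' + 1) (-sin t) t := (hasDerivAt_cos t).add_const 1
  rw [hasDerivAt_pi]
  intro i
  fin_cases i <;> simp only [oloidP, Fin.zero_eta, Fin.mk_one, Fin.reduceFinMk, cons_val]
  · refine ((((hasDerivAt_const t m).div hden' hden).const_add (-1 / 2)).add
      ((hasDerivAt_cos t).const_mul (m - 1))).congr_deriv ?_
    field_simp
    ring
  · exact (hasDerivAt_sin t).const_mul (1 - m)
  · have hsqrt := (((hasDerivAt_cos t).const_mul 2).add_const 1).sqrt hrad
    refine ((hsqrt.const_mul m).div hden' hden).congr_deriv ?_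
    field_simp
    linear_combination m * sin t * hrr

lemma oloid_cross_algebraic {m c s r : ℝ} (hsc : s ^ 2 + c ^ 2 = 1) (hr : r ^ 2 = 2 * c + 1)
    (hr0 : r ≠ 0) (hc : c + 1 ≠ 0) :
    ![1 / (c + 1) + c, -s, r / (c + 1)] ⨯₃
        ![m * s / (c + 1) ^ 2 + (1 - m) * s, (1 - m) * c, m * s * c / (r * (c + 1) ^ 2)] =
      ![c * ((3 * m - 2) * c - 1) / ((c + 1) * r),
        s * ((2 - 3 * m) * c + 1) / ((c + 1) * r),
        ((2 - 3 * m) * c + 1) / (c + 1)] := by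
  rw [cross_apply]
  ext i
  fin_cases i <;> simp only [Fin.zero_eta, Fin.mk_one, Fin.reduceFinMk, cons_val] <;>
    field_simp
  · linear_combination (-(c * m)) * hsc - c * (c + 1) * (1 - m) * hr
  · linear_combination ((1 - m) * (c + 1) ^ 2 + m) * s * hr
  · linear_combination ((1 - m) * (c + 1) ^ 2 + m) * hsc

theorem oloid_cross_product_of_partials :
    ∀ m ∈ Set.Icc (0:ℝ) 1, ∀ t ∈ Set.Ioo (-(2*π/3)) (2*π/3),
      (deriv (fun m' => oloidP m' t) m) ⨯₃ (deriv (fun t' => oloidP m t') t) =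
        ![Real.cos t * ((3*m - 2) * Real.cos t - 1) /
            (2 * Real.cos (t/2) ^ 2 * Real.sqrt (2 * Real.cos t + 1)),
          Real.sin t * ((2 - 3*m) * Real.cos t + 1) /
            ((Real.cos t + 1) * Real.sqrt (2 * Real.cos t + 1)),
          ((2 - 3*m) * Real.cos t + 1) / (Real.cos t + 1)] := by
  intro m _ t ht
  have hcos := neg_half_lt_cos_of_mem_Ioo ht
  have hhalf : 2 * cos (t / 2) ^ 2 = cos t + 1 := by
    rw [cos_sq, show 2 * (t / 2) = t by ring]
    ring
  rw [(hasDerivAt_oloidP_fst m t).deriv, (hasDerivAt_oloidP_snd m t hcos).deriv, hhalf]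
  exact oloid_cross_algebraic (sin_sq_add_cos_sq t) (sq_sqrt (by linarith))
    (sqrt_pos.mpr (by linarith)).ne' (by linarith)
end

section
/- The single-variable area integral evaluates to 4π: ∫_{−2π/3}^{2π/3} (cos t + 2) / (cos(t/2)·√(2 cos t + 1)) dt = 4π. -/
/-!
On `(-2π/3, 2π/3)` the integrand is the derivative of
`F t = 2 arcsin (2 sin (t/2) / √3) + 2 arcsin (tan (t/2) / √3)`. With `c = cos (t/2)` we have
`2 cos t + 1 = 4c² - 1 = 3 - 4 sin² (t/2)`, so the two arcsines contribute `2c / √(2 cos t + 1)` and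
`1 / (c √(2 cos t + 1))`, which add up to the integrand because `cos t + 2 = 2c² + 1`.
The integrand blows up at `±2π/3` but is nonnegative, so it is integrable as the derivative of
the continuous function `F`, and the integral is `F (2π/3) - F (-2π/3) = 2π + 2π`: both arcsine
arguments equal `1` at `2π/3`, and `F` is odd.
-/

open Real Set

theorem HasDerivAt.arcsin {f : ℝ → ℝ} {f' x : ℝ} (hf : HasDerivAt f f' x) (hx : f x ^ 2 < 1) :
    HasDerivAt (fun y => arcsin (f y)) (f' / √(1 - f x ^ 2)) x := by
  have hx' : |f x| < 1 := by rwa [← sq_lt_one_iff_abs_lt_one]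
  exact ((hasDerivAt_arcsin (abs_lt.1 hx').1.ne' (abs_lt.1 hx').2.ne).comp x hf).congr_deriv
    (one_div_mul_eq_div _ _)

theorem intervalIntegral.integral_eq_sub_of_hasDerivAt_of_nonneg {f F : ℝ → ℝ} {a b : ℝ}
    (hab : a ≤ b) (hcont : ContinuousOn F (Icc a b))
    (hderiv : ∀ x ∈ Ioo a b, HasDerivAt F (f x) x) (hf : ∀ x ∈ Ioo a b, 0 ≤ f x) :
    ∫ x in a..b, f x = F b - F a :=
  integral_eq_sub_of_hasDerivAt_of_le hab hcont hderiv <|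
    (intervalIntegrable_iff_integrableOn_Ioc_of_le hab).2 <|
      integrableOn_deriv_of_nonneg hcont hderiv hf

namespace Real

theorem cos_eq_two_mul_cos_sq_half_sub_one (t : ℝ) : cos t = 2 * cos (t / 2) ^ 2 - 1 := by
  rw [cos_sq, mul_div_cancel₀ t two_ne_zero]; ring

theorem cos_half_pos {t : ℝ} (ht : t ∈ Ioo (-π) π) : 0 < cos (t / 2) :=
  cos_pos_of_mem_Ioo ⟨by linarith [ht.1], by linarith [ht.2]⟩

theorem half_lt_cos_of_abs_lt {x : ℝ} (hx : |x| < π / 3) : 1 / 2 < cos x := by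
  rw [← cos_abs, ← cos_pi_div_three]
  exact cos_lt_cos_of_nonneg_of_le_pi (abs_nonneg x) (by linarith [pi_pos]) hx

theorem hasDerivAt_arcsin_two_mul_sin_half_div_sqrt_three {t : ℝ} (ht : 0 < 2 * cos t + 1) :
    HasDerivAt (fun u => arcsin (2 * sin (u / 2) / √3)) (cos (t / 2) / √(2 * cos t + 1)) t := by
  have hsub : 1 - (2 * sin (t / 2) / √3) ^ 2 = (2 * cos t + 1) / 3 := by
    rw [div_pow, sq_sqrt zero_le_three, cos_eq_two_mul_cos_sq_half_sub_one, cos_sq']; ring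
  have hsin : HasDerivAt (fun u => 2 * sin (u / 2) / √3) (cos (t / 2) / √3) t := by
    refine ((((hasDerivAt_sin _).comp t ((hasDerivAt_id t).div_const 2)).const_mul 2).div_const
      √3).congr_deriv ?_
    simp only [id]; ring
  convert hsin.arcsin (by rw [← sub_pos, hsub]; positivity) using 1
  rw [hsub, sqrt_div ht.le, div_div_div_cancel_right₀ (sqrt_pos.2 three_pos).ne']

theorem hasDerivAt_arcsin_tan_half_div_sqrt_three {t : ℝ} (hc : 0 < cos (t / 2))
    (ht : 0 < 2 * cos t + 1) :
    HasDerivAt (fun u => arcsin (tan (u / 2) / √3))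
      (1 / (2 * cos (t / 2) * √(2 * cos t + 1))) t := by
  have hsub : 1 - (tan (t / 2) / √3) ^ 2 = (2 * cos t + 1) / (3 * cos (t / 2) ^ 2) := by
    rw [div_pow, sq_sqrt zero_le_three, tan_eq_sin_div_cos, div_pow, sin_sq,
      cos_eq_two_mul_cos_sq_half_sub_one t]
    field_simp; ring
  have htan : HasDerivAt (fun u => tan (u / 2) / √3) (1 / (2 * cos (t / 2) ^ 2 * √3)) t := by
    refine (((hasDerivAt_tan hc.ne').comp t ((hasDerivAt_id t).div_const 2)).div_const
      √3).congr_deriv ?_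
    field_simp
  convert htan.arcsin (by rw [← sub_pos, hsub]; positivity) using 1
  rw [hsub, sqrt_div ht.le, sqrt_mul zero_le_three, sqrt_sq hc.le]
  field_simp

end Real

noncomputable def oloidAntideriv (t : ℝ) : ℝ :=
  2 * arcsin (2 * sin (t / 2) / √3) + 2 * arcsin (tan (t / 2) / √3)

theorem oloidAntideriv_neg (t : ℝ) : oloidAntideriv (-t) = -oloidAntideriv t := by
  simp only [oloidAntideriv, neg_div, sin_neg, tan_neg, mul_neg, arcsin_neg]
  ring

theorem oloidAntideriv_two_pi_div_three : oloidAntideriv (2 * π / 3) = 2 * π := by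
  have hhalf : 2 * π / 3 / 2 = π / 3 := by ring
  have hsqrt : √3 ≠ 0 := by positivity
  have hsin_arg : 2 * (√3 / 2) / √3 = 1 := by field_simp
  simp only [oloidAntideriv, hhalf, sin_pi_div_three, tan_pi_div_three, hsin_arg, div_self hsqrt,
    arcsin_one]
  ring

theorem continuousOn_oloidAntideriv :
    ContinuousOn oloidAntideriv (Icc (-(2 * π / 3)) (2 * π / 3)) := by
  have hcos : ∀ t ∈ Icc (-(2 * π / 3)) (2 * π / 3), cos (t / 2) ≠ 0 := fun t ht =>
    (cos_half_pos ⟨by linarith [ht.1, pi_pos], by linarith [ht.2, pi_pos]⟩).ne'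
  have htan : ContinuousOn (fun u => tan (u / 2)) (Icc (-(2 * π / 3)) (2 * π / 3)) := fun t ht =>
    (continuousAt_tan.2 (hcos t ht)).comp_continuousWithinAt (f := (· / 2)) (by fun_prop)
  unfold oloidAntideriv
  refine .add (.mul continuousOn_const (continuous_arcsin.comp_continuousOn ?_))
    (.mul continuousOn_const (continuous_arcsin.comp_continuousOn (htan.div_const _)))
  fun_prop

theorem hasDerivAt_oloidAntideriv {t : ℝ} (ht : t ∈ Ioo (-(2 * π / 3)) (2 * π / 3)) :
    HasDerivAt oloidAntideriv ((cos t + 2) / (cos (t / 2) * √(2 * cos t + 1))) t := by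
  have hc : 1 / 2 < cos (t / 2) :=
    half_lt_cos_of_abs_lt (abs_lt.2 ⟨by linarith [ht.1], by linarith [ht.2]⟩)
  have hq : 0 < 2 * cos t + 1 := by rw [cos_eq_two_mul_cos_sq_half_sub_one t]; nlinarith
  refine (((hasDerivAt_arcsin_two_mul_sin_half_div_sqrt_three hq).const_mul 2).add
    ((hasDerivAt_arcsin_tan_half_div_sqrt_three (by linarith) hq).const_mul 2)).congr_deriv ?_
  rw [cos_eq_two_mul_cos_sq_half_sub_one t]
  field_simp
  ring

theorem oloid_area_integral :
    ∫ t in (-(2*π/3))..(2*π/3),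
        (Real.cos t + 2) / (Real.cos (t/2) * Real.sqrt (2 * Real.cos t + 1)) = 4 * π := by
  have hab : -(2 * π / 3) ≤ 2 * π / 3 := by linarith [pi_pos]
  have hnonneg : ∀ t ∈ Ioo (-(2 * π / 3)) (2 * π / 3),
      0 ≤ (cos t + 2) / (cos (t / 2) * √(2 * cos t + 1)) := fun t ht =>
    div_nonneg (by linarith [neg_one_le_cos t]) <| mul_nonneg
      (cos_half_pos ⟨by linarith [ht.1, pi_pos], by linarith [ht.2, pi_pos]⟩).le (sqrt_nonneg _)
  rw [intervalIntegral.integral_eq_sub_of_hasDerivAt_of_nonneg hab continuousOn_oloidAntideriv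
    (fun t ht => hasDerivAt_oloidAntideriv ht) hnonneg, oloidAntideriv_neg,
    oloidAntideriv_two_pi_div_three]
  ring
end
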